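/- arXiv:1910.04380 — 3 statements merged into one kernel-verified Lean document; each statement's English description precedes it below -/
import Mathlib

section
/- Let G act on a countably infinite set X and H act on a countably infinite set Y, and let G × H act naturally on the disjoint union X ⊔ Y. Then for every n, f_{G×H}(n) ≤ (n+1)·f_G(n)·f_H(n), where f denotes the number of orbits on n-element subsets. -/
/-!
An `n`-subset of `X ⊕ Y` is an `i`-subset of `X` together with an `(n - i)`-subset of `Y`, and
its `G × H`-orbit is determined by the pair of their orbits, so
`f_{G×H}(n) ≤ ∑_{i ≤ n} f_G(i) f_H(n - i)`. Each term is at most `f_G(n) f_H(n)` because orbit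
counts on an infinite set are non-decreasing. If `f_G(n)` is infinite this is countability of `X`;
otherwise, summing a `G`-invariant function on `k`-sets over the `k`-subsets of each `n`-set is an
injective linear map from functions on `k`-orbits to functions on `n`-orbits, because the
inclusion matrix of `k`-sets versus `n`-sets of an infinite set has trivial kernel.
-/

universe u

/-- The number of orbits of `G` on `n`-element subsets of `X` (as a cardinal). -/
noncomputable def orbitCountC (G : Type*) [Group G] (X : Type u) [MulAction G X] (n : ℕ) :
    Cardinal.{u} :=
  letI := Classical.decEq X
  Cardinal.mk (Quot fun s t : {s : Finset X // s.card = n} =>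
    ∃ g : G, (Finset.image (fun x => g • x) s.1) = t.1)

section SumAction

variable (G H : Type*) (X Y : Type u) [Group G] [Group H] [MulAction G X] [MulAction H Y]

/-- The natural action of `G × H` on the disjoint union `X ⊔ Y`. -/
instance sumSMul : SMul (G × H) (X ⊕ Y) :=
  ⟨fun p z => z.map (fun x => p.1 • x) (fun y => p.2 • y)⟩

instance sumMulAction : MulAction (G × H) (X ⊕ Y) where
  one_smul z := by
    cases z with
    | inl x => show Sum.inl ((1 : G) • x) = Sum.inl x; rw [one_smul]
    | inr y => show Sum.inr ((1 : H) • y) = Sum.inr y; rw [one_smul]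
  mul_smul p q z := by
    cases z with
    | inl x => show Sum.inl ((p.1 * q.1) • x) = Sum.inl (p.1 • q.1 • x); rw [mul_smul]
    | inr y => show Sum.inr ((p.2 * q.2) • y) = Sum.inr (p.2 • q.2 • y); rw [mul_smul]

end SumAction

open Finset

namespace Finset

variable {α M : Type*} [DecidableEq α] [AddCommMonoid M]

theorem powersetCard_erase (s : Finset α) (x : α) (k : ℕ) :
    (s.erase x).powersetCard k = (s.powersetCard k).filter (x ∉ ·) := by
  ext A
  simp only [mem_powersetCard, mem_filter, subset_erase]
  tauto

theorem sum_sum_powersetCard_erase (s : Finset α) (k : ℕ) (f : Finset α → M) :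
    ∑ x ∈ s, ∑ A ∈ (s.erase x).powersetCard k, f A = (#s - k) • ∑ A ∈ s.powersetCard k, f A := by
  calc ∑ x ∈ s, ∑ A ∈ (s.erase x).powersetCard k, f A
      = ∑ A ∈ s.powersetCard k, ∑ x ∈ s, if x ∉ A then f A else 0 := by
        simp_rw [powersetCard_erase, sum_filter]
        exact sum_comm
    _ = ∑ A ∈ s.powersetCard k, (#s - k) • f A := by
        refine sum_congr rfl fun A hA => ?_
        obtain ⟨hAs, hA⟩ := mem_powersetCard.1 hA
        rw [← sum_filter, sum_const, filter_not, filter_mem_eq_inter, inter_eq_right.2 hAs,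
          card_sdiff_of_subset hAs, hA]
    _ = (#s - k) • ∑ A ∈ s.powersetCard k, f A := (smul_sum ..).symm

theorem sum_powersetCard_eq_zero_of_forall_erase [IsAddTorsionFree M] {s : Finset α} {k : ℕ}
    (hk : k < #s) {f : Finset α → M}
    (h : ∀ x ∈ s, ∑ A ∈ (s.erase x).powersetCard k, f A = 0) :
    ∑ A ∈ s.powersetCard k, f A = 0 := by
  apply nsmul_right_injective (Nat.sub_ne_zero_of_lt hk)
  simp only [smul_zero, ← sum_sum_powersetCard_erase]
  exact sum_eq_zero h

theorem sum_powersetCard_succ_insert {a : α} {s : Finset α} (ha : a ∉ s) (k : ℕ)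
    (f : Finset α → M) :
    ∑ A ∈ (insert a s).powersetCard (k + 1), f A =
      ∑ A ∈ s.powersetCard (k + 1), f A + ∑ A ∈ s.powersetCard k, f (insert a A) := by
  have hdisj : Disjoint (s.powersetCard (k + 1)) ((s.powersetCard k).image (insert a)) := by
    simp only [disjoint_left, mem_powersetCard, mem_image, not_exists, not_and]
    rintro _ ⟨hA, -⟩ E - rfl
    exact ha (hA (mem_insert_self a E))
  rw [powersetCard_succ_insert ha, sum_union hdisj, sum_image]
  intro E hE E' hE' hEE'
  rw [mem_coe, mem_powersetCard] at hE hE'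
  rw [← erase_insert (fun h => ha (hE.1 h)), ← erase_insert (fun h => ha (hE'.1 h)), hEE']

end Finset

section Vanishing

variable {α M : Type*} [AddCommMonoid M] [IsAddTorsionFree M]

theorem eq_zero_of_sum_powersetCard_eq_zero {U : Set α} (hU : U.Infinite) {k n : ℕ} (hkn : k ≤ n)
    {f : Finset α → M} (hf : ∀ B : Finset α, ↑B ⊆ U → #B = n → ∑ A ∈ B.powersetCard k, f A = 0)
    {A : Finset α} (hAU : ↑A ⊆ U) (hA : #A = k) : f A = 0 := by
  classical
  induction k generalizing U f A with
  | zero =>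
    obtain ⟨B, hBU, hB⟩ := hU.exists_subset_card_eq n
    simpa [card_eq_zero.1 hA] using hf B hBU hB
  | succ k ih =>
    obtain ⟨a, ha⟩ := card_pos.1 (by omega : 0 < #A)
    -- `E ↦ f (insert a E)` satisfies the hypothesis for `k` on `U \ {a}`.
    rw [← insert_erase ha]
    refine ih (U := U \ {a}) (hU.sdiff (Set.finite_singleton a)) (by omega)
      (f := fun E => f (insert a E)) ?_ (by rw [coe_erase]; exact Set.sdiff_subset_sdiff_left hAU)
      (by rw [card_erase_of_mem ha, hA, Nat.add_sub_cancel])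
    intro B hBU hB
    have haB : a ∉ B := fun h => (hBU h).2 rfl
    have hB' : ↑B ⊆ U := hBU.trans Set.sdiff_subset
    have hinsert : ↑(insert a B) ⊆ U := by
      rw [coe_insert]; exact Set.insert_subset (hAU (mem_coe.2 ha)) hB'
    have hsucc : ∑ A ∈ (insert a B).powersetCard (k + 1), f A = 0 := by
      refine sum_powersetCard_eq_zero_of_forall_erase (by rw [card_insert_of_notMem haB]; omega)
        fun x hx => hf _ (((coe_subset.2 (erase_subset x _))).trans hinsert) ?_
      rw [card_erase_of_mem hx, card_insert_of_notMem haB, hB, Nat.add_sub_cancel]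
    rwa [sum_powersetCard_succ_insert haB, hf B hB' hB, zero_add] at hsucc

end Vanishing

section SubsetOrbits

variable (G : Type*) [Group G] (X : Type u) [MulAction G X]

def subsetOrbitRel (n : ℕ) (s t : {s : Finset X // #s = n}) : Prop :=
  ∃ g : G, s.1.map (MulAction.toPerm g).toEmbedding = t.1

abbrev SubsetOrbits (n : ℕ) : Type u := Quot (subsetOrbitRel G X n)

theorem orbitCountC_eq_mk_subsetOrbits (n : ℕ) :
    orbitCountC G X n = Cardinal.mk (SubsetOrbits G X n) := by
  classical
  unfold orbitCountC SubsetOrbits subsetOrbitRel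
  simp only [map_eq_image, Equiv.coe_toEmbedding]
  congr!

theorem subsetOrbitRel_equivalence (n : ℕ) : Equivalence (subsetOrbitRel G X n) where
  refl _ := ⟨1, by ext; simp⟩
  symm := fun ⟨g, h⟩ => ⟨g⁻¹, by rw [← h, map_map]; convert map_refl; ext; simp⟩
  trans := fun ⟨g, h⟩ ⟨g', h'⟩ =>
    ⟨g' * g, by rw [← h', ← h, map_map]; congr 1; ext; simp [mul_smul]⟩

variable {G X}

theorem subsetOrbits_mk_eq_iff {n : ℕ} {s t : {s : Finset X // #s = n}} :
    (Quot.mk _ s : SubsetOrbits G X n) = Quot.mk _ t ↔ subsetOrbitRel G X n s t := by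
  rw [Quot.eq, (subsetOrbitRel_equivalence G X n).eqvGen_iff]

theorem sigma_subsetOrbits_mk_eq_iff {i j : ℕ} {A B : Finset X} (hA : #A = i) (hB : #B = j) :
    (⟨i, Quot.mk _ ⟨A, hA⟩⟩ : Σ n, SubsetOrbits G X n) = ⟨j, Quot.mk _ ⟨B, hB⟩⟩ ↔
      ∃ g : G, A.map (MulAction.toPerm g).toEmbedding = B := by
  constructor
  · rw [Sigma.mk.inj_iff]
    rintro ⟨rfl, h⟩
    exact subsetOrbits_mk_eq_iff.1 (eq_of_heq h)
  · rintro ⟨g, rfl⟩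
    obtain rfl : i = j := by rw [← hA, ← hB, card_map]
    exact congrArg _ (Quot.sound ⟨g, rfl⟩)

end SubsetOrbits

section Monotone

variable {G : Type*} [Group G] {X : Type u} [MulAction G X]

noncomputable def orbitLift (k : ℕ) : (SubsetOrbits G X k →₀ ℚ) →ₗ[ℚ] (Finset X → ℚ) where
  toFun a A := if h : #A = k then a (Quot.mk _ ⟨A, h⟩) else 0
  map_add' a b := by ext A; by_cases h : #A = k <;> simp [h]
  map_smul' c a := by ext A; by_cases h : #A = k <;> simp [h]

theorem orbitLift_map (k : ℕ) (a : SubsetOrbits G X k →₀ ℚ) (g : G) (A : Finset X) :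
    orbitLift k a (A.map (MulAction.toPerm g).toEmbedding) = orbitLift k a A := by
  by_cases hA : #A = k
  · have hgA : #(A.map (MulAction.toPerm g).toEmbedding) = k := by rw [card_map, hA]
    simp only [orbitLift, LinearMap.coe_mk, AddHom.coe_mk, dif_pos hA, dif_pos hgA]
    exact congrArg a (Quot.sound ⟨g⁻¹, by rw [map_map]; convert map_refl; ext; simp⟩)
  · simp [orbitLift, hA]

theorem sum_powersetCard_orbitLift_eq {k n : ℕ} (a : SubsetOrbits G X k →₀ ℚ)
    {s t : {s : Finset X // #s = n}} (hst : subsetOrbitRel G X n s t) :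
    ∑ A ∈ s.1.powersetCard k, orbitLift k a A = ∑ A ∈ t.1.powersetCard k, orbitLift k a A := by
  obtain ⟨g, hg⟩ := hst
  rw [← hg, powersetCard_map, sum_map]
  exact sum_congr rfl fun A _ => (orbitLift_map k a g A).symm

noncomputable def orbitInclusion (k n : ℕ) :
    (SubsetOrbits G X k →₀ ℚ) →ₗ[ℚ] (SubsetOrbits G X n → ℚ) :=
  LinearMap.pi fun q => ∑ A ∈ q.out.1.powersetCard k, (LinearMap.proj A).comp (orbitLift k)

theorem orbitInclusion_apply (k n : ℕ) (a : SubsetOrbits G X k →₀ ℚ) (q : SubsetOrbits G X n) :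
    orbitInclusion k n a q = ∑ A ∈ q.out.1.powersetCard k, orbitLift k a A := by
  simp [orbitInclusion]

theorem orbitInclusion_injective [Infinite X] {k n : ℕ} (hkn : k ≤ n) :
    Function.Injective (orbitInclusion (G := G) (X := X) k n) := by
  rw [← LinearMap.ker_eq_bot, LinearMap.ker_eq_bot']
  intro a ha
  have hsum (B : Finset X) (_ : (B : Set X) ⊆ Set.univ) (hB : #B = n) :
      ∑ A ∈ B.powersetCard k, orbitLift k a A = 0 := by
    have hout := subsetOrbits_mk_eq_iff.1 (Quot.out_eq (Quot.mk (subsetOrbitRel G X n) ⟨B, hB⟩))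
    rw [← sum_powersetCard_orbitLift_eq a hout, ← orbitInclusion_apply, ha, Pi.zero_apply]
  ext q
  induction q using Quot.ind with
  | mk A =>
    have := eq_zero_of_sum_powersetCard_eq_zero Set.infinite_univ hkn hsum (Set.subset_univ _) A.2
    simpa [orbitLift, A.2] using this

theorem mk_subsetOrbits_le_of_finite [Infinite X] {k n : ℕ} (hkn : k ≤ n)
    [Finite (SubsetOrbits G X n)] :
    Cardinal.mk (SubsetOrbits G X k) ≤ Cardinal.mk (SubsetOrbits G X n) := by
  have := Fintype.ofFinite (SubsetOrbits G X n)
  calc Cardinal.mk (SubsetOrbits G X k) = Module.rank ℚ (SubsetOrbits G X k →₀ ℚ) := by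
        rw [rank_finsupp_self, Cardinal.lift_uzero]
    _ ≤ Module.rank ℚ (SubsetOrbits G X n → ℚ) :=
        LinearMap.rank_le_of_injective _ (orbitInclusion_injective hkn)
    _ = Cardinal.mk (SubsetOrbits G X n) := by rw [rank_fun', Cardinal.mk_fintype]

theorem orbitCountC_mono [Countable X] [Infinite X] {k n : ℕ} (hkn : k ≤ n) :
    orbitCountC G X k ≤ orbitCountC G X n := by
  rw [orbitCountC_eq_mk_subsetOrbits, orbitCountC_eq_mk_subsetOrbits]
  cases finite_or_infinite (SubsetOrbits G X n)
  · exact mk_subsetOrbits_le_of_finite hkn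
  · exact Cardinal.mk_le_aleph0.trans (Cardinal.aleph0_le_mk _)

end Monotone

namespace Finset

variable {α β γ δ : Type*}

@[simp]
theorem toLeft_map_sumMap (u : Finset (α ⊕ β)) (f : α ↪ γ) (g : β ↪ δ) :
    (u.map (f.sumMap g)).toLeft = u.toLeft.map f := by
  ext; simp

@[simp]
theorem toRight_map_sumMap (u : Finset (α ⊕ β)) (f : α ↪ γ) (g : β ↪ δ) :
    (u.map (f.sumMap g)).toRight = u.toRight.map g := by
  ext; simp

end Finset

section Product

variable {G H : Type*} {X Y : Type u} [Group G] [Group H] [MulAction G X] [MulAction H Y]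

theorem toPerm_prod_toEmbedding (p : G × H) :
    (MulAction.toPerm p : Equiv.Perm (X ⊕ Y)).toEmbedding =
      (MulAction.toPerm p.1).toEmbedding.sumMap (MulAction.toPerm p.2).toEmbedding := by
  ext (x | y) <;> rfl

theorem map_toPerm_prod_eq_iff (p : G × H) (S T : Finset (X ⊕ Y)) :
    S.map (MulAction.toPerm p).toEmbedding = T ↔
      S.toLeft.map (MulAction.toPerm p.1).toEmbedding = T.toLeft ∧
        S.toRight.map (MulAction.toPerm p.2).toEmbedding = T.toRight := by
  rw [← Finset.sumEquiv.injective.eq_iff, Prod.ext_iff]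
  simp [toPerm_prod_toEmbedding]

theorem orbitCountC_sum_le (n : ℕ) :
    orbitCountC (G × H) (X ⊕ Y) n ≤
      Cardinal.sum fun i : Fin (n + 1) => orbitCountC G X i * orbitCountC H Y (n - i) := by
  let assemble : (Σ i : Fin (n + 1), SubsetOrbits G X i × SubsetOrbits H Y (n - i)) →
      (Σ i, SubsetOrbits G X i) × (Σ j, SubsetOrbits H Y j) :=
    fun ⟨i, a, b⟩ => (⟨i, a⟩, ⟨n - i, b⟩)
  let parts : SubsetOrbits (G × H) (X ⊕ Y) n →
      (Σ i, SubsetOrbits G X i) × (Σ j, SubsetOrbits H Y j) :=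
    Quot.lift (fun S => (⟨_, Quot.mk _ ⟨S.1.toLeft, rfl⟩⟩, ⟨_, Quot.mk _ ⟨S.1.toRight, rfl⟩⟩))
      fun S T ⟨p, hp⟩ => by
        obtain ⟨hL, hR⟩ := (map_toPerm_prod_eq_iff p S.1 T.1).1 hp
        exact Prod.ext ((sigma_subsetOrbits_mk_eq_iff _ _).2 ⟨p.1, hL⟩)
          ((sigma_subsetOrbits_mk_eq_iff _ _).2 ⟨p.2, hR⟩)
  have parts_injective : Function.Injective parts := by
    rintro ⟨S⟩ ⟨T⟩ hST
    obtain ⟨g, hL⟩ := (sigma_subsetOrbits_mk_eq_iff _ _).1 (congrArg Prod.fst hST)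
    obtain ⟨h, hR⟩ := (sigma_subsetOrbits_mk_eq_iff _ _).1 (congrArg Prod.snd hST)
    exact Quot.sound ⟨(g, h), (map_toPerm_prod_eq_iff _ _ _).2 ⟨hL, hR⟩⟩
  have range_parts : Set.range parts ⊆ Set.range assemble := by
    rintro _ ⟨⟨S⟩, rfl⟩
    have hcard := S.1.card_toLeft_add_card_toRight
    refine ⟨⟨⟨#S.1.toLeft, by omega⟩, Quot.mk _ ⟨S.1.toLeft, rfl⟩,
      Quot.mk _ ⟨S.1.toRight, (by omega : #S.1.toRight = n - #S.1.toLeft)⟩⟩, Prod.ext rfl ?_⟩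
    exact (sigma_subsetOrbits_mk_eq_iff _ _).2 ⟨1, by ext; simp⟩
  simp only [orbitCountC_eq_mk_subsetOrbits]
  calc Cardinal.mk (SubsetOrbits (G × H) (X ⊕ Y) n) = Cardinal.mk (Set.range parts) :=
        (Cardinal.mk_range_eq _ parts_injective).symm
    _ ≤ Cardinal.mk (Set.range assemble) := Cardinal.mk_le_mk_of_subset range_parts
    _ ≤ Cardinal.mk (Σ i : Fin (n + 1), SubsetOrbits G X i × SubsetOrbits H Y (n - i)) :=
        Cardinal.mk_range_le
    _ = _ := by simp only [Cardinal.mk_sigma, Cardinal.mk_prod, Cardinal.lift_id]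

end Product

/-- Let `G` act on a countably infinite set `X` and `H` act on a countably
infinite set `Y`, and let `G × H` act naturally on the disjoint union `X ⊔ Y`.  Then for
every `n`, `f_{G×H}(n) ≤ (n+1) · f_G(n) · f_H(n)`, where `f` denotes the number of
orbits on `n`-element subsets. -/
theorem stmt3 (G H : Type*) (X Y : Type u) [Group G] [Group H] [MulAction G X]
    [MulAction H Y] [Countable X] [Infinite X] [Countable Y] [Infinite Y] (n : ℕ) :
    orbitCountC (G × H) (X ⊕ Y) n ≤
      ((n : Cardinal.{u}) + 1) * orbitCountC G X n * orbitCountC H Y n := by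
  calc orbitCountC (G × H) (X ⊕ Y) n
      ≤ Cardinal.sum fun i : Fin (n + 1) => orbitCountC G X i * orbitCountC H Y (n - i) :=
        orbitCountC_sum_le n
    _ ≤ Cardinal.sum fun _ : Fin (n + 1) => orbitCountC G X n * orbitCountC H Y n :=
        Cardinal.sum_le_sum _ _ fun i =>
          mul_le_mul' (orbitCountC_mono i.is_le) (orbitCountC_mono (n.sub_le i))
    _ = ((n : Cardinal.{u}) + 1) * orbitCountC G X n * orbitCountC H Y n := by
        simp [Cardinal.sum_const, mul_assoc]
end

section
/- For every k ≥ 1, lim_{n→∞} F_{n,k}^{1/n} exists and equals the reciprocal of the smallest positive real root of the polynomial 1 - x - x² - … - x^k. -/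
/-- The generalized Fibonacci numbers of order `k`:
`F_{n,k} = Σ_{i=1}^{k} F_{n-i,k}`, with `F_{n,k} = 0` for `n < 0` and `F_{0,k} = 1`. -/
def genFib (k : ℕ) : ℕ → ℕ
  | 0 => 1
  | (n + 1) => ∑ i ∈ Finset.range k, if i ≤ n then genFib k (n - i) else 0
decreasing_by
  exact Nat.lt_succ_of_le (Nat.sub_le n i)

/-! Let `r ∈ (0, 1]` be the positive root, unique since `∑_{i=1}^k x^i` is increasing, so
that `∑_{i=1}^k r^i = 1`. Multiplying the recursion by `r^(n+1)` shows that `F_{n+1,k} r^(n+1)`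
is a combination of the previous `k` values `F_{n-i,k} r^(n-i)` with weights `r^(i+1)` summing
to `1` (a convex one once `n + 1 ≥ k`). Hence `F_{n,k} r^n` stays between `r^k` and `1`, and its
`n`-th root tends to `1`. -/

open Finset Filter Topology

lemma sum_Icc_one_pow_eq_sum_range (k : ℕ) (x : ℝ) :
    ∑ i ∈ Icc 1 k, x ^ i = ∑ i ∈ range k, x ^ (i + 1) := by
  rw [range_eq_Ico, sum_Ico_add' (fun i => x ^ i), zero_add, Finset.Ico_add_one_right_eq_Icc]

section RootOfSumPow

variable {k : ℕ}

lemma strictMonoOn_sum_Icc_one_pow (hk : 1 ≤ k) :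
    StrictMonoOn (fun x : ℝ => ∑ i ∈ Icc 1 k, x ^ i) (Set.Ici 0) := by
  intro a ha b _ hab
  refine sum_lt_sum (fun i _ => pow_le_pow_left₀ ha hab.le i) ⟨1, mem_Icc.2 ⟨le_rfl, hk⟩, ?_⟩
  simpa using hab

lemma exists_sum_Icc_one_pow_eq_one (hk : 1 ≤ k) :
    ∃ r ∈ Set.Ioc (0 : ℝ) 1, ∑ i ∈ Icc 1 k, r ^ i = 1 := by
  have hcont : Continuous fun x : ℝ => ∑ i ∈ Icc 1 k, x ^ i := by fun_prop
  have h0 : ∑ i ∈ Icc 1 k, (0 : ℝ) ^ i = 0 :=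
    sum_eq_zero fun i hi => zero_pow (by simp at hi; omega)
  have hmem : (1 : ℝ) ∈ Set.Icc (∑ i ∈ Icc 1 k, (0 : ℝ) ^ i) (∑ i ∈ Icc 1 k, (1 : ℝ) ^ i) := by
    simpa [h0] using hk
  obtain ⟨r, ⟨hr0, hr1⟩, hroot⟩ := intermediate_value_Icc zero_le_one hcont.continuousOn hmem
  refine ⟨r, ⟨hr0.lt_of_ne ?_, hr1⟩, hroot⟩
  rintro rfl
  exact zero_ne_one (h0.symm.trans hroot)

end RootOfSumPow

section GenFibBounds

variable {k : ℕ} {r : ℝ}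

lemma genFib_succ (k n : ℕ) :
    genFib k (n + 1) = ∑ i ∈ range k, if i ≤ n then genFib k (n - i) else 0 := by
  rw [genFib]

lemma one_le_genFib (hk : 1 ≤ k) (n : ℕ) : 1 ≤ genFib k n := by
  induction n with
  | zero => simp [genFib]
  | succ m ih =>
    rw [genFib_succ]
    calc 1 ≤ genFib k m := ih
      _ = if 0 ≤ m then genFib k (m - 0) else 0 := by simp
      _ ≤ _ := single_le_sum (f := fun i => if i ≤ m then genFib k (m - i) else 0)
          (fun i _ => Nat.zero_le _) (mem_range.2 hk)

lemma genFib_succ_mul_pow (k n : ℕ) (r : ℝ) :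
    genFib k (n + 1) * r ^ (n + 1) =
      ∑ i ∈ range k, if i ≤ n then genFib k (n - i) * r ^ (n - i) * r ^ (i + 1) else 0 := by
  rw [genFib_succ, Nat.cast_sum, sum_mul]
  refine sum_congr rfl fun i _ => ?_
  split_ifs with hi
  · rw [mul_assoc, ← pow_add, show n - i + (i + 1) = n + 1 by omega]
  · simp

lemma genFib_mul_pow_le_one (hr : 0 ≤ r) (hroot : ∑ i ∈ range k, r ^ (i + 1) = 1) (n : ℕ) :
    genFib k n * r ^ n ≤ 1 := by
  induction n using Nat.strong_induction_on with
  | _ n ih =>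
    rcases n with _ | m
    · simp [genFib]
    rw [genFib_succ_mul_pow, ← hroot]
    refine sum_le_sum fun i _ => ?_
    split_ifs with hi
    · exact mul_le_of_le_one_left (by positivity) (ih (m - i) (by omega))
    · positivity

lemma pow_le_genFib_mul_pow (hk : 1 ≤ k) (hr : 0 ≤ r) (hr1 : r ≤ 1)
    (hroot : ∑ i ∈ range k, r ^ (i + 1) = 1) (n : ℕ) :
    r ^ k ≤ genFib k n * r ^ n := by
  induction n using Nat.strong_induction_on with
  | _ n ih =>
    by_cases hn : n < k
    · calc r ^ k ≤ r ^ n := pow_le_pow_of_le_one hr hr1 hn.le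
        _ ≤ genFib k n * r ^ n :=
          le_mul_of_one_le_left (by positivity) (by exact_mod_cast one_le_genFib hk n)
    obtain ⟨m, rfl⟩ : ∃ m, n = m + 1 := ⟨n - 1, by omega⟩
    rw [genFib_succ_mul_pow]
    calc r ^ k = ∑ i ∈ range k, r ^ k * r ^ (i + 1) := by rw [← mul_sum, hroot, mul_one]
      _ ≤ _ := by
        refine sum_le_sum fun i hi => ?_
        have him : i ≤ m := by have := mem_range.1 hi; omega
        rw [if_pos him]
        exact mul_le_mul_of_nonneg_right (ih (m - i) (by omega)) (by positivity)

end GenFibBounds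

lemma tendsto_const_rpow_one_div_natCast {c : ℝ} (hc : 0 < c) :
    Tendsto (fun n : ℕ => c ^ ((1 : ℝ) / n)) atTop (𝓝 1) := by
  simpa [Function.comp_def] using ((Real.continuousAt_const_rpow hc.ne').tendsto).comp
    tendsto_one_div_atTop_nhds_zero_nat

lemma tendsto_rpow_one_div_of_mul_pow_mem_Icc {u : ℕ → ℝ} {r c C : ℝ} (hr : 0 < r) (hc : 0 < c)
    (hu : ∀ n, u n * r ^ n ∈ Set.Icc c C) :
    Tendsto (fun n : ℕ => u n ^ ((1 : ℝ) / n)) atTop (𝓝 r⁻¹) := by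
  have hsplit : ∀ n : ℕ, n ≠ 0 → u n ^ ((1 : ℝ) / n) = (u n * r ^ n) ^ ((1 : ℝ) / n) * r⁻¹ := by
    intro n hn
    have hu0 : 0 ≤ u n := nonneg_of_mul_nonneg_left (hc.le.trans (hu n).1) (by positivity)
    rw [Real.mul_rpow hu0 (by positivity), one_div, Real.pow_rpow_inv_natCast hr.le hn,
      mul_assoc, mul_inv_cancel₀ hr.ne', mul_one]
  have hC : 0 < C := hc.trans_le ((hu 0).1.trans (hu 0).2)
  have hsq : Tendsto (fun n : ℕ => (u n * r ^ n) ^ ((1 : ℝ) / n)) atTop (𝓝 1) :=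
    tendsto_of_tendsto_of_tendsto_of_le_of_le (tendsto_const_rpow_one_div_natCast hc)
      (tendsto_const_rpow_one_div_natCast hC)
      (fun n => Real.rpow_le_rpow hc.le (hu n).1 (by positivity))
      (fun n => Real.rpow_le_rpow (hc.le.trans (hu n).1) (hu n).2 (by positivity))
  rw [← one_mul r⁻¹]
  refine (hsq.mul_const r⁻¹).congr' ?_
  filter_upwards [eventually_ne_atTop 0] with n hn
  exact (hsplit n hn).symm

/-- For every `k ≥ 1`, `lim_{n→∞} F_{n,k}^{1/n}` exists and equals the
reciprocal of the smallest positive real root of the polynomial `1 - x - x² - … - x^k`. -/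
theorem stmt9 (k : ℕ) (hk : 1 ≤ k) :
    ∃ r : ℝ, 0 < r ∧ (1 - ∑ i ∈ Finset.Icc 1 k, r ^ i = 0) ∧
      (∀ s : ℝ, 0 < s → (1 - ∑ i ∈ Finset.Icc 1 k, s ^ i = 0) → r ≤ s) ∧
      Filter.Tendsto (fun n : ℕ => (genFib k n : ℝ) ^ ((1 : ℝ) / n))
        Filter.atTop (nhds r⁻¹) := by
  obtain ⟨r, ⟨hr0, hr1⟩, hroot⟩ := exists_sum_Icc_one_pow_eq_one hk
  have hroot' : ∑ i ∈ range k, r ^ (i + 1) = 1 := by rwa [← sum_Icc_one_pow_eq_sum_range]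
  refine ⟨r, hr0, sub_eq_zero.2 hroot.symm, fun s hs hsroot => ?_, ?_⟩
  · exact (strictMonoOn_sum_Icc_one_pow hk).le_iff_le hr0.le hs.le |>.1
      (by rw [hroot, ← sub_eq_zero.1 hsroot])
  · exact tendsto_rpow_one_div_of_mul_pow_mem_Icc hr0 (pow_pos hr0 k) fun n =>
      ⟨pow_le_genFib_mul_pow hk hr0.le hr1 hroot' n, genFib_mul_pow_le_one hr0.le hroot' n⟩
end

section
/- Let H be a loose union of groups G_1,…,G_k acting on X_1,…,X_k. Then, after reordering, there exist j ≤ k and positive integers k_1,…,k_j with Σ k_i = k such that, as permutation groups on Y = ⊔X_i, Π_{i≤j} (H_{(Y∖X_i)}^{X_i})^{k_i} ≤ H ≤ Π_{i≤j} (G_i ≀ S_{k_i}), where the middle group H permutes the orbit of each X_i among k_i conjugate copies. -/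
/-!
Fix `σ i ∈ H` carrying the part `Xs i` onto the chosen representative `Xs (rep i)` of its
`H`-orbit of parts, and take `e i` to be the restriction of `σ i`.

If `f` acts on each `Xs i` as the `e i`-transport of an element `t i ∈ H` supported on
`Xs (rep i)`, then `f` agrees on `Xs i` with `(σ i)⁻¹ * t i * σ i ∈ H`, which is supported on
`Xs i`. These conjugates have disjoint supports and their product is `f`, so `f ∈ H`.

Conversely, `h ∈ H` maps `Xs i` onto some part `Xs i'` in the same orbit, so `rep i' = rep i`,
and `σ i' * h * (σ i)⁻¹ ∈ H` stabilizes `Xs (rep i)`. Hence it induces an element of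
`G (rep i)`, and `h` acts on `Xs i` as its transport.
-/

open Equiv Set Function Pointwise

namespace Equiv.Perm

variable {Y : Type*}

theorem image_eq_iff_forall_mem_iff (h : Perm Y) (S T : Set Y) :
    (fun y => h y) '' S = T ↔ ∀ y, y ∈ S ↔ h y ∈ T := by
  constructor
  · rintro rfl y
    exact (h.injective.mem_set_image).symm
  · intro hST
    ext y
    refine ⟨?_, fun hy => ⟨h⁻¹ y, (hST _).2 (by simpa using hy), by simp⟩⟩
    rintro ⟨x, hx, rfl⟩
    exact (hST x).1 hx

theorem conj_apply_of_notMem {σ t : Perm Y} {S T : Set Y} (hσ : ∀ y, y ∈ S ↔ σ y ∈ T)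
    (ht : ∀ y ∉ T, t y = y) {y : Y} (hy : y ∉ S) : (σ⁻¹ * t * σ) y = y := by
  rw [mul_apply, mul_apply, ht _ (mt (hσ y).2 hy), inv_def, symm_apply_apply]

theorem conj_apply_eq_subtypeEquiv_symm {σ t : Perm Y} {S T : Set Y}
    (hσ : ∀ y, y ∈ S ↔ σ y ∈ T) {g : Perm T} (hg : ∀ x : T, (g x : Y) = t x) (x : S) :
    (σ⁻¹ * t * σ) x = ((σ.subtypeEquiv hσ).symm (g (σ.subtypeEquiv hσ x)) : Y) := by
  simp [hg]

theorem conj_apply_mem_iff {σ σ' h : Perm Y} {S S' T : Set Y} (hσ : ∀ y, y ∈ S ↔ σ y ∈ T)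
    (hσ' : ∀ y, y ∈ S' ↔ σ' y ∈ T) (hh : ∀ y, y ∈ S ↔ h y ∈ S') (y : Y) :
    (σ' * h * σ⁻¹) y ∈ T ↔ y ∈ T := by
  rw [mul_apply, mul_apply, ← hσ', ← hh, hσ, inv_def, apply_symm_apply]

end Equiv.Perm

namespace Subgroup

variable {Y ι : Type*}

theorem mem_of_forall_exists_eqOn [Finite ι] {Xs : ι → Set Y}
    (hdisj : Pairwise (Disjoint on Xs)) (hcover : ⋃ i, Xs i = univ) {H : Subgroup (Perm Y)}
    {f : Perm Y} (hf : ∀ i, MapsTo f (Xs i) (Xs i))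
    (hloc : ∀ i, ∃ p ∈ H, (∀ y ∉ Xs i, p y = y) ∧ EqOn p f (Xs i)) : f ∈ H := by
  classical
  cases nonempty_fintype ι
  have key : ∀ s : Finset ι, ∃ q ∈ H, ∀ i, ∀ y ∈ Xs i, q y = if i ∈ s then f y else y := by
    intro s
    induction s using Finset.induction_on with
    | empty => exact ⟨1, H.one_mem, by simp⟩
    | insert a s ha ih =>
      obtain ⟨q, hqH, hq⟩ := ih
      obtain ⟨p, hpH, hpfix, hpf⟩ := hloc a
      refine ⟨p * q, H.mul_mem hpH hqH, fun i y hy => ?_⟩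
      rw [Perm.mul_apply, hq i y hy]
      by_cases hia : i = a
      · subst hia
        simp [ha, hpf hy]
      · have hmem : (if i ∈ s then f y else y) ∈ Xs i := by
          split_ifs
          exacts [hf i hy, hy]
        rw [hpfix _ (disjoint_left.1 (hdisj hia) hmem)]
        simp [hia]
  obtain ⟨q, hqH, hq⟩ := key Finset.univ
  convert hqH
  ext y
  obtain ⟨i, hi⟩ := mem_iUnion.1 (hcover ▸ mem_univ y)
  simp [hq i y hi]

end Subgroup

section PartOrbit

variable {Y ι : Type*} (H : Subgroup (Perm Y)) (Xs : ι → Set Y)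

def partOrbitRel : Setoid ι := (MulAction.orbitRel H (Set Y)).comap Xs

theorem partOrbitRel_iff {i j : ι} :
    partOrbitRel H Xs i j ↔ ∃ h ∈ H, (fun y => h y) '' Xs j = Xs i := by
  rw [partOrbitRel, Setoid.comap_rel]
  simp only [MulAction.orbitRel_apply, MulAction.mem_orbit_iff,
    ← Set.image_smul, Subgroup.smul_def, Perm.smul_def, Subtype.exists, exists_prop]

noncomputable def orbitRep (i : ι) : ι := (Quotient.mk (partOrbitRel H Xs) i).out

theorem orbitRep_orbitRep (i : ι) : orbitRep H Xs (orbitRep H Xs i) = orbitRep H Xs i := by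
  simp only [orbitRep, Quotient.out_eq]

theorem exists_image_eq_orbitRep (i : ι) :
    ∃ h ∈ H, (fun y => h y) '' Xs i = Xs (orbitRep H Xs i) :=
  (partOrbitRel_iff H Xs).1 (Quotient.mk_out i)

theorem orbitRep_eq_of_image_eq {h : Perm Y} (hh : h ∈ H) {i j : ι}
    (him : (fun y => h y) '' Xs i = Xs j) : orbitRep H Xs j = orbitRep H Xs i :=
  congrArg Quotient.out (Quotient.sound ((partOrbitRel_iff H Xs).2 ⟨h, hh, him⟩))

theorem coe_cast_congrArg {i j : ι} (hij : i = j) (x : Xs i) :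
    ((cast (congrArg (fun t => ((Xs t : Set Y) : Type _)) hij) x : Xs j) : Y) = x := by
  subst hij
  rfl

end PartOrbit

theorem stmt18_general (Y : Type*) (k : ℕ) (Xs : Fin k → Set Y)
    (hdisj : Pairwise fun i j => Disjoint (Xs i) (Xs j)) (hcover : (⋃ i, Xs i) = Set.univ)
    (H : Subgroup (Equiv.Perm Y))
    (Gs Ns : ∀ i : Fin k, Subgroup (Equiv.Perm (Xs i)))
    (hinv : ∀ h ∈ H, ∀ i : Fin k, ∃ i' : Fin k, (fun y => h y) '' Xs i = Xs i')
    (hG : ∀ (i : Fin k) (g : Equiv.Perm (Xs i)), g ∈ Gs i ↔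
      ∃ h ∈ H, ((fun y => h y) '' Xs i = Xs i) ∧ ∀ x : Xs i, (g x : Y) = h x)
    (hN : ∀ (i : Fin k) (g : Equiv.Perm (Xs i)), g ∈ Ns i ↔
      ∃ h ∈ H, (∀ y ∉ Xs i, h y = y) ∧ ∀ x : Xs i, (g x : Y) = h x) :
    ∃ rep : Fin k → Fin k, (∀ i, rep (rep i) = rep i) ∧
      (∀ i, ∃ h ∈ H, (fun y => h y) '' Xs i = Xs (rep i)) ∧
      (∃ j : ℕ, j ≤ k ∧ (Finset.univ.image rep).card = j ∧
        ∑ i ∈ Finset.univ.image rep,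
          (Finset.univ.filter (fun i' => rep i' = i)).card = k) ∧
      ∃ e : ∀ i : Fin k, (Xs i) ≃ (Xs (rep i)),
        (∀ f : Equiv.Perm Y,
          (∀ (i : Fin k) (y : Y), y ∈ Xs i → f y ∈ Xs i) →
          (∀ i : Fin k, ∃ g ∈ Ns (rep i),
            ∀ x : Xs i, f (x : Y) = (((e i).symm (g (e i x)) : Xs i) : Y)) →
          f ∈ H) ∧
        (∀ h ∈ H, ∀ i : Fin k, ∃ (i' : Fin k) (hi' : rep i' = rep i),
          ((fun y => h y) '' Xs i = Xs i') ∧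
          ∃ g ∈ Gs (rep i), ∀ x : Xs i,
            h (x : Y) = (((e i').symm
              (cast (congrArg (fun t => ((Xs t : Set Y) : Type _)) hi'.symm)
                (g (e i x))) : Xs i') : Y)) := by
  choose σ hσH hσim using exists_image_eq_orbitRep H Xs
  have hσ : ∀ i y, y ∈ Xs i ↔ σ i y ∈ Xs (orbitRep H Xs i) :=
    fun i => (Perm.image_eq_iff_forall_mem_iff _ _ _).1 (hσim i)
  refine ⟨orbitRep H Xs, orbitRep_orbitRep H Xs, fun i => ⟨σ i, hσH i, hσim i⟩,
    ⟨_, Finset.card_image_le.trans_eq (Finset.card_fin k), rfl,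
      (Finset.card_eq_sum_card_image _ _).symm.trans (Finset.card_fin k)⟩,
    fun i => (σ i).subtypeEquiv (hσ i), ?_, ?_⟩
  · intro f hf hfN
    refine Subgroup.mem_of_forall_exists_eqOn hdisj hcover (fun i y hy => hf i y hy) fun i => ?_
    obtain ⟨g, hgN, hfg⟩ := hfN i
    obtain ⟨t, htH, htfix, htg⟩ := (hN _ g).1 hgN
    refine ⟨(σ i)⁻¹ * t * σ i, H.mul_mem (H.mul_mem (H.inv_mem (hσH i)) htH) (hσH i),
      fun y hy => Perm.conj_apply_of_notMem (hσ i) htfix hy, fun y hy => ?_⟩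
    exact (Perm.conj_apply_eq_subtypeEquiv_symm (hσ i) htg ⟨y, hy⟩).trans (hfg ⟨y, hy⟩).symm
  · intro h hh i
    obtain ⟨i', him⟩ := hinv h hh i
    have hi' := orbitRep_eq_of_image_eq H Xs hh him
    have hσ' : ∀ y, y ∈ Xs i' ↔ σ i' y ∈ Xs (orbitRep H Xs i) := by
      rw [← hi']
      exact hσ i'
    have hT := Perm.conj_apply_mem_iff (hσ i) hσ' ((Perm.image_eq_iff_forall_mem_iff _ _ _).1 him)
    have hG' : (σ i' * h * (σ i)⁻¹).subtypePerm hT ∈ Gs (orbitRep H Xs i) :=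
      (hG _ _).2 ⟨_, H.mul_mem (H.mul_mem (hσH i') hh) (H.inv_mem (hσH i)),
        (Perm.image_eq_iff_forall_mem_iff _ _ _).2 fun y => (hT y).symm, fun _ => rfl⟩
    refine ⟨i', hi', him, _, hG', fun x => ?_⟩
    simp only [subtypeEquiv_symm, subtypeEquiv_apply, Perm.subtypePerm_apply]
    rw [coe_cast_congrArg Xs hi'.symm]
    simp

/-- Let `H` be a loose union of groups `G₁,…,G_k` acting on the parts
`X₁,…,X_k` of a partition of `Y`.  Then, choosing a representative of each `H`-orbit of
parts (recorded by an idempotent map `rep`, whose image has some size `j ≤ k`, the fibers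
having sizes `k_i` summing to `k`) and identifications `e i : X i ≃ X (rep i)` along the
orbit, we have `Π_{i≤j} (H_{(Y∖X_i)}^{X_i})^{k_i} ≤ H ≤ Π_{i≤j} (G_i ≀ S_{k_i})`:
every permutation of `Y` fixing each part setwise and acting on each `X i` (via the
identifications) as an element of the pointwise-stabilizer-induced group `N (rep i)`
lies in `H`; and every `h ∈ H` permutes the parts within each `rep`-fiber, acting on
each part (via the identifications) as an element of `G (rep i)`. -/
theorem stmt18 (Y : Type*) (k : ℕ) (Xs : Fin k → Set Y)
    (hdisj : Pairwise fun i j => Disjoint (Xs i) (Xs j)) (hcover : (⋃ i, Xs i) = Set.univ)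
    (H : Subgroup (Equiv.Perm Y))
    (Gs Ns : ∀ i : Fin k, Subgroup (Equiv.Perm (Xs i)))
    (hinv : ∀ h ∈ H, ∀ i : Fin k, ∃ i' : Fin k, (fun y => h y) '' Xs i = Xs i')
    (hG : ∀ (i : Fin k) (g : Equiv.Perm (Xs i)), g ∈ Gs i ↔
      ∃ h ∈ H, ((fun y => h y) '' Xs i = Xs i) ∧ ∀ x : Xs i, (g x : Y) = h x)
    (hN : ∀ (i : Fin k) (g : Equiv.Perm (Xs i)), g ∈ Ns i ↔
      ∃ h ∈ H, (∀ y ∉ Xs i, h y = y) ∧ ∀ x : Xs i, (g x : Y) = h x)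
    (hfinidx : ∀ i : Fin k, (Ns i).relIndex (Gs i) ≠ 0) :
    ∃ rep : Fin k → Fin k, (∀ i, rep (rep i) = rep i) ∧
      (∀ i, ∃ h ∈ H, (fun y => h y) '' Xs i = Xs (rep i)) ∧
      (∃ j : ℕ, j ≤ k ∧ (Finset.univ.image rep).card = j ∧
        ∑ i ∈ Finset.univ.image rep,
          (Finset.univ.filter (fun i' => rep i' = i)).card = k) ∧
      ∃ e : ∀ i : Fin k, (Xs i) ≃ (Xs (rep i)),
        (∀ f : Equiv.Perm Y,
          (∀ (i : Fin k) (y : Y), y ∈ Xs i → f y ∈ Xs i) →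
          (∀ i : Fin k, ∃ g ∈ Ns (rep i),
            ∀ x : Xs i, f (x : Y) = (((e i).symm (g (e i x)) : Xs i) : Y)) →
          f ∈ H) ∧
        (∀ h ∈ H, ∀ i : Fin k, ∃ (i' : Fin k) (hi' : rep i' = rep i),
          ((fun y => h y) '' Xs i = Xs i') ∧
          ∃ g ∈ Gs (rep i), ∀ x : Xs i,
            h (x : Y) = (((e i').symm
              (cast (congrArg (fun t => ((Xs t : Set Y) : Type _)) hi'.symm)
                (g (e i x))) : Xs i') : Y)) :=
  stmt18_general Y k Xs hdisj hcover H Gs Ns hinv hG hN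
end
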